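/- Let L be an SPS lattice, S a tight covering square of L, and i ∈ P_l. Then π̄_{l,i} = con_{L[S]}(y_{l,i}, y_{l,i+1}) and π̄_{l,i} ≤ ᾱ_r(S). -/

import Mathlib

namespace ForkCongruence

/-- A congruence of a lattice: an equivalence relation compatible with `⊔` and `⊓`. -/
structure LatCon (K : Type*) [Lattice K] where
  rel : K → K → Prop
  refl : ∀ x, rel x x
  symm : ∀ {x y}, rel x y → rel y x
  trans : ∀ {x y z}, rel x y → rel y z → rel x z
  sup_comp : ∀ {a b c d}, rel a b → rel c d → rel (a ⊔ c) (b ⊔ d)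
  inf_comp : ∀ {a b c d}, rel a b → rel c d → rel (a ⊓ c) (b ⊓ d)

namespace LatCon

variable {K : Type*} [Lattice K]

theorem rel_ext {θ ψ : LatCon K} (h : θ.rel = ψ.rel) : θ = ψ := by
  cases θ; cases ψ; cases h; rfl

instance : PartialOrder (LatCon K) where
  le θ ψ := ∀ ⦃x y⦄, θ.rel x y → ψ.rel x y
  le_refl _ _ _ h := h
  le_trans _ _ _ h₁ h₂ _ _ h := h₂ (h₁ h)
  le_antisymm θ ψ h₁ h₂ :=
    rel_ext (by funext x y; exact propext ⟨fun h => h₁ h, fun h => h₂ h⟩)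

/-- The smallest lattice congruence containing a binary relation. -/
def gen (s : K → K → Prop) : LatCon K where
  rel x y := ∀ θ : LatCon K, (∀ a b, s a b → θ.rel a b) → θ.rel x y
  refl x _ _ := LatCon.refl _ x
  symm h θ hs := θ.symm (h θ hs)
  trans h₁ h₂ θ hs := θ.trans (h₁ θ hs) (h₂ θ hs)
  sup_comp h₁ h₂ θ hs := θ.sup_comp (h₁ θ hs) (h₂ θ hs)
  inf_comp h₁ h₂ θ hs := θ.inf_comp (h₁ θ hs) (h₂ θ hs)

instance : SemilatticeSup (LatCon K) where
  sup θ ψ := gen (fun x y => θ.rel x y ∨ ψ.rel x y)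
  le_sup_left θ ψ x y h χ hχ := hχ x y (Or.inl h)
  le_sup_right θ ψ x y h χ hχ := hχ x y (Or.inr h)
  sup_le θ ψ χ h₁ h₂ x y h := h χ (fun a b hab => hab.elim (fun w => h₁ w) (fun w => h₂ w))

instance : SemilatticeInf (LatCon K) where
  inf θ ψ :=
    { rel := fun x y => θ.rel x y ∧ ψ.rel x y
      refl := fun x => ⟨θ.refl x, ψ.refl x⟩
      symm := fun h => ⟨θ.symm h.1, ψ.symm h.2⟩
      trans := fun h₁ h₂ => ⟨θ.trans h₁.1 h₂.1, ψ.trans h₁.2 h₂.2⟩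
      sup_comp := fun h₁ h₂ => ⟨θ.sup_comp h₁.1 h₂.1, ψ.sup_comp h₁.2 h₂.2⟩
      inf_comp := fun h₁ h₂ => ⟨θ.inf_comp h₁.1 h₂.1, ψ.inf_comp h₁.2 h₂.2⟩ }
  inf_le_left _ _ _ _ h := h.1
  inf_le_right _ _ _ _ h := h.2
  le_inf _ _ _ h₁ h₂ _ _ h := ⟨h₁ h, h₂ h⟩

instance : Lattice (LatCon K) :=
  { (inferInstance : SemilatticeSup (LatCon K)),
    (inferInstance : SemilatticeInf (LatCon K)) with }

instance : OrderBot (LatCon K) where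
  bot :=
    { rel := Eq
      refl := fun _ => rfl
      symm := Eq.symm
      trans := Eq.trans
      sup_comp := fun h₁ h₂ => by rw [h₁, h₂]
      inf_comp := fun h₁ h₂ => by rw [h₁, h₂] }
  bot_le θ x y h := h ▸ θ.refl x

/-- The principal congruence `con(a, b)`: the smallest congruence collapsing `a` and `b`. -/
def conOf (a b : K) : LatCon K := gen (fun x y => x = a ∧ y = b)

/-- The restriction of a congruence of `K` to a sublattice `L`. -/
def restrict (θ : LatCon K) (L : Sublattice K) : LatCon L where
  rel x y := θ.rel ↑x ↑y
  refl x := θ.refl ↑x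
  symm h := θ.symm h
  trans h₁ h₂ := θ.trans h₁ h₂
  sup_comp {a b c d} h₁ h₂ := by
    show θ.rel ↑(a ⊔ c) ↑(b ⊔ d)
    rw [Sublattice.coe_sup, Sublattice.coe_sup]
    exact θ.sup_comp h₁ h₂
  inf_comp {a b c d} h₁ h₂ := by
    show θ.rel ↑(a ⊓ c) ↑(b ⊓ d)
    rw [Sublattice.coe_inf, Sublattice.coe_inf]
    exact θ.inf_comp h₁ h₂

/-- A congruence `α` of the sublattice `L` extends to `K` if it is the restriction of some
congruence of `K`. -/
def ExtendsTo {L : Sublattice K} (α : LatCon L) : Prop :=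
  ∃ θ : LatCon K, θ.restrict L = α

/-- The minimal extension of a congruence of a sublattice `L` of `K`: the smallest congruence
of `K` containing it (viewed as a set of pairs). -/
def minExt {L : Sublattice K} (α : LatCon L) : LatCon K :=
  gen (fun x y => ∃ (hx : x ∈ L) (hy : y ∈ L), α.rel ⟨x, hx⟩ ⟨y, hy⟩)

end LatCon

/-- `K` is a congruence-preserving extension of its sublattice `L`: the restriction map is a
bijection from the congruences of `K` onto the congruences of `L`. -/
def IsCongPresExt {K : Type*} [Lattice K] (L : Sublattice K) : Prop :=
  Function.Bijective (fun θ : LatCon K => θ.restrict L)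

/-- A lattice is semimodular if `x ⊓ y ⋖ y` implies `x ⋖ x ⊔ y`. -/
def IsSemimodular (K : Type*) [Lattice K] : Prop :=
  ∀ x y : K, x ⊓ y ⋖ y → x ⋖ x ⊔ y

/-- A lattice is slim if its set of join-irreducible elements contains no three-element
antichain. -/
def IsSlim (K : Type*) [Lattice K] : Prop :=
  ¬ ∃ x y z : K, SupIrred x ∧ SupIrred y ∧ SupIrred z ∧
      ¬x ≤ y ∧ ¬y ≤ x ∧ ¬x ≤ z ∧ ¬z ≤ x ∧ ¬y ≤ z ∧ ¬z ≤ y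

/-- An SPS lattice: slim, planar (which follows from slimness together with semimodularity)
and semimodular. Finiteness is assumed separately as `[Finite K]`. -/
def IsSPS (K : Type*) [Lattice K] : Prop :=
  IsSemimodular K ∧ IsSlim K

/-- A covering square `S = {o, a_l, a_r, i}` of a lattice. -/
structure CovSquare (K : Type*) [Lattice K] where
  o : K
  al : K
  ar : K
  i : K
  al_ne_ar : al ≠ ar
  inf_eq : al ⊓ ar = o
  sup_eq : al ⊔ ar = i
  o_covby_al : o ⋖ al
  o_covby_ar : o ⋖ ar
  al_covby_i : al ⋖ i
  ar_covby_i : ar ⋖ i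

namespace CovSquare

variable {K : Type*} [Lattice K]

/-- A covering square is tight if `a_l` and `a_r` are the only lower covers of `i`. -/
def Tight (S : CovSquare K) : Prop :=
  ∀ x : K, x ⋖ S.i → x = S.al ∨ x = S.ar

/-- A covering square is wide if it is not tight. -/
def Wide (S : CovSquare K) : Prop := ¬ S.Tight

/-- A covering square is distributive if the principal ideal `↓i` is a distributive lattice. -/
def Distributive (S : CovSquare K) : Prop :=
  ∀ x y z : K, x ≤ S.i → y ≤ S.i → z ≤ S.i →
    x ⊓ (y ⊔ z) = (x ⊓ y) ⊔ (x ⊓ z)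

end CovSquare

/-- `K` together with the data below is the fork extension `L[S]` of the sublattice `L` of `K`
at the covering square `S` of `L`. The elements `xl k, yl k, zl k` represent
`x_{l,k+1}, y_{l,k+1}, z_{l,k+1}` of the construction (`0`-based indexing), and similarly
on the right. -/
structure ForkExtension (K : Type*) [Lattice K] (L : Sublattice K) (S : CovSquare L) where
  n : ℕ
  m : ℕ
  npos : 0 < n
  mpos : 0 < m
  t : K
  zl : ℕ → K
  zr : ℕ → K
  xl : ℕ → L
  yl : ℕ → L
  xr : ℕ → L
  yr : ℕ → L
  xl_zero : xl 0 = S.al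
  yl_zero : yl 0 = S.o
  xr_zero : xr 0 = S.ar
  yr_zero : yr 0 = S.o
  -- the successive covering squares `{y_{l,k+1}, x_{l,k+1}, y_{l,k}, x_{l,k}}` in `L`
  xl_succ_covby : ∀ k, k + 1 < n → xl (k + 1) ⋖ xl k
  yl_succ_covby : ∀ k, k + 1 < n → yl (k + 1) ⋖ yl k
  yl_covby_xl : ∀ k, k < n → yl k ⋖ xl k
  xl_succ_ne_yl : ∀ k, k + 1 < n → xl (k + 1) ≠ yl k
  xl_inf_yl : ∀ k, k + 1 < n → xl (k + 1) ⊓ yl k = yl (k + 1)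
  xl_sup_yl : ∀ k, k + 1 < n → xl (k + 1) ⊔ yl k = xl k
  -- `n` is largest possible
  left_max : ¬ ∃ x : L, x ⋖ xl (n - 1) ∧ x ≠ yl (n - 1) ∧
      x ⊓ yl (n - 1) ⋖ x ∧ x ⊓ yl (n - 1) ⋖ yl (n - 1) ∧ x ⊔ yl (n - 1) = xl (n - 1)
  -- the same on the right
  xr_succ_covby : ∀ k, k + 1 < m → xr (k + 1) ⋖ xr k
  yr_succ_covby : ∀ k, k + 1 < m → yr (k + 1) ⋖ yr k
  yr_covby_xr : ∀ k, k < m → yr k ⋖ xr k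
  xr_succ_ne_yr : ∀ k, k + 1 < m → xr (k + 1) ≠ yr k
  xr_inf_yr : ∀ k, k + 1 < m → xr (k + 1) ⊓ yr k = yr (k + 1)
  xr_sup_yr : ∀ k, k + 1 < m → xr (k + 1) ⊔ yr k = xr k
  right_max : ¬ ∃ x : L, x ⋖ xr (m - 1) ∧ x ≠ yr (m - 1) ∧
      x ⊓ yr (m - 1) ⋖ x ∧ x ⊓ yr (m - 1) ⋖ yr (m - 1) ∧ x ⊔ yr (m - 1) = xr (m - 1)
  -- the new elements
  t_not_mem : t ∉ L
  zl_not_mem : ∀ k, k < n → zl k ∉ L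
  zr_not_mem : ∀ k, k < m → zr k ∉ L
  mem_or_new : ∀ x : K, x ∈ L ∨ x = t ∨ (∃ k < n, x = zl k) ∨ (∃ k < m, x = zr k)
  -- `{o, z_{l,1}, z_{r,1}, a_l, a_r, t, i}` is a sublattice isomorphic to `S7`
  zl_sup_zr : zl 0 ⊔ zr 0 = t
  zl_zero_covby_t : zl 0 ⋖ t
  zr_zero_covby_t : zr 0 ⋖ t
  t_covby_i : t ⋖ (S.i : K)
  -- the chains `z_{l,1} ≻ ⋯ ≻ z_{l,n}` and `z_{r,1} ≻ ⋯ ≻ z_{r,m}`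
  zl_succ_covby : ∀ k, k + 1 < n → zl (k + 1) ⋖ zl k
  zr_succ_covby : ∀ k, k + 1 < m → zr (k + 1) ⋖ zr k
  -- `y_{l,k} ⋖ z_{l,k} ⋖ x_{l,k}` in `K`, and similarly on the right
  yl_covby_zl : ∀ k, k < n → (yl k : K) ⋖ zl k
  zl_covby_xl : ∀ k, k < n → zl k ⋖ (xl k : K)
  yr_covby_zr : ∀ k, k < m → (yr k : K) ⋖ zr k
  zr_covby_xr : ∀ k, k < m → zr k ⋖ (xr k : K)

namespace ForkExtension

variable {K : Type*} [Lattice K] {L : Sublattice K} {S : CovSquare L}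

/-- `x_{l,k+1}` is a (left) protrusion: it has at least three lower covers in `L`. -/
def ProtL (F : ForkExtension K L S) (k : ℕ) : Prop :=
  k < F.n ∧ ∃ u v w : L, u ≠ v ∧ u ≠ w ∧ v ≠ w ∧
    u ⋖ F.xl k ∧ v ⋖ F.xl k ∧ w ⋖ F.xl k

/-- `x_{r,k+1}` is a (right) protrusion: it has at least three lower covers in `L`. -/
def ProtR (F : ForkExtension K L S) (k : ℕ) : Prop :=
  k < F.m ∧ ∃ u v w : L, u ≠ v ∧ u ≠ w ∧ v ≠ w ∧
    u ⋖ F.xr k ∧ v ⋖ F.xr k ∧ w ⋖ F.xr k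

end ForkExtension



/-!
A congruence collapsing `a_r` and `i` collapses `o` and `a_l` (meet with `a_l`), and then, by
meeting with `x_{l,j+1}` down the left chain, every pair `y_{l,j}, x_{l,j}`. At a protrusion
`x_{l,k}` a third lower cover `w` gives `w ⊓ y_{l,k} ≡ w` and `w ⊔ x_{l,k+1} = x_{l,k}`; slimness
forces `w ⊓ y_{l,k} ≤ y_{l,k+1}`, so `y_{l,k+1} ≡ x_{l,k} ≡ y_{l,k}`. The equality of the two
congruences holds for any pair of elements of a sublattice.
-/

namespace LatCon

variable {K : Type*} [Lattice K]

theorem rel_gen {s : K → K → Prop} {a b : K} (h : s a b) : (gen s).rel a b :=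
  fun _ hθ => hθ a b h

theorem gen_le {s : K → K → Prop} {θ : LatCon K} (h : ∀ a b, s a b → θ.rel a b) : gen s ≤ θ :=
  fun _ _ hxy => hxy θ h

theorem rel_conOf (a b : K) : (conOf a b).rel a b :=
  rel_gen ⟨rfl, rfl⟩

theorem conOf_le {a b : K} {θ : LatCon K} (h : θ.rel a b) : conOf a b ≤ θ :=
  gen_le fun _ _ ⟨ha, hb⟩ => ha ▸ hb ▸ h

theorem minExt_conOf {L : Sublattice K} (a b : L) :
    minExt (conOf a b) = conOf (a : K) (b : K) := by
  refine le_antisymm (gen_le ?_) (conOf_le (rel_gen ⟨a.2, b.2, rel_conOf a b⟩))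
  rintro x y ⟨hx, hy, hxy⟩
  refine hxy ((conOf (a : K) b).restrict L) ?_
  rintro _ _ ⟨rfl, rfl⟩
  exact rel_conOf _ _

theorem rel_of_inf_le_of_sup_eq (θ : LatCon K) {x y x' y' w : K} (hyx : θ.rel y x)
    (hy'x' : θ.rel y' x') (hwx : w ≤ x) (hinf : w ⊓ y ≤ y') (hsup : w ⊔ x' = x) :
    θ.rel y y' := by
  have hw : θ.rel (w ⊓ y) w := by
    simpa only [inf_eq_left.2 hwx] using θ.inf_comp (θ.refl w) hyx
  have hy'x : θ.rel y' x := by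
    simpa only [sup_eq_right.2 hinf, hsup] using θ.sup_comp hw hy'x'
  exact θ.trans hyx (θ.symm hy'x)

end LatCon

theorem exists_supIrred_le_not_le {α : Type*} [Lattice α] [Finite α] {a b : α} (h : ¬a ≤ b) :
    ∃ j, SupIrred j ∧ j ≤ a ∧ ¬j ≤ b := by
  obtain ⟨j, hj⟩ := (Set.toFinite {c | c ≤ a ∧ ¬c ≤ b}).exists_minimal ⟨a, le_rfl, h⟩
  obtain ⟨hja, hjb⟩ := hj.1
  refine ⟨j, ⟨fun hmin => hjb ((hmin inf_le_right).trans inf_le_left), fun c d hcd => ?_⟩, hja, hjb⟩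
  have hc : c ≤ j := hcd ▸ le_sup_left
  have hd : d ≤ j := hcd ▸ le_sup_right
  by_contra! hne
  have hcb : c ≤ b := by
    by_contra hcb
    exact hne.1 (hj.eq_of_le ⟨hc.trans hja, hcb⟩ hc)
  have hdb : d ≤ b := by
    by_contra hdb
    exact hne.2 (hj.eq_of_le ⟨hd.trans hja, hdb⟩ hd)
  exact hjb (hcd ▸ sup_le hcb hdb)

section Slim

variable {α : Type*} [Lattice α] [Finite α]

theorem IsSlim.le_or_le_or_le (hslim : IsSlim α) {a₁ a₂ a₃ b₁ b₂ b₃ : α}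
    (h₁₂ : a₁ ⊓ a₂ ≤ b₁ ⊓ b₂) (h₁₃ : a₁ ⊓ a₃ ≤ b₁ ⊓ b₃) (h₂₃ : a₂ ⊓ a₃ ≤ b₂ ⊓ b₃) :
    a₁ ≤ b₁ ∨ a₂ ≤ b₂ ∨ a₃ ≤ b₃ := by
  by_contra! hn
  obtain ⟨j₁, hj₁, hja₁, hjb₁⟩ := exists_supIrred_le_not_le hn.1
  obtain ⟨j₂, hj₂, hja₂, hjb₂⟩ := exists_supIrred_le_not_le hn.2.1
  obtain ⟨j₃, hj₃, hja₃, hjb₃⟩ := exists_supIrred_le_not_le hn.2.2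
  have incomparable : ∀ {a a' b b' j j' : α}, a ⊓ a' ≤ b ⊓ b' → j ≤ a → ¬j ≤ b → j' ≤ a' →
      ¬j' ≤ b' → ¬j ≤ j' ∧ ¬j' ≤ j := fun h hja hjb hja' hjb' =>
    ⟨fun hle => hjb ((le_inf hja (hle.trans hja')).trans (h.trans inf_le_left)),
      fun hle => hjb' ((le_inf (hle.trans hja) hja').trans (h.trans inf_le_right))⟩
  obtain ⟨h₁₂, h₂₁⟩ := incomparable h₁₂ hja₁ hjb₁ hja₂ hjb₂
  obtain ⟨h₁₃, h₃₁⟩ := incomparable h₁₃ hja₁ hjb₁ hja₃ hjb₃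
  obtain ⟨h₂₃, h₃₂⟩ := incomparable h₂₃ hja₂ hjb₂ hja₃ hjb₃
  exact hslim ⟨j₁, j₂, j₃, hj₁, hj₂, hj₃, h₁₂, h₂₁, h₁₃, h₃₁, h₂₃, h₃₂⟩

theorem IsSlim.inf_le_inf_of_covBy (hslim : IsSlim α) {x y x' w g : α} (hyx : y ⋖ x)
    (hx'x : x' ⋖ x) (hwx : w ⋖ x) (hx'y : x' ≠ y) (hwy : w ≠ y)
    (hcov : x' ⊓ y ⋖ y) (hyg : y < g) (hxg : x ⊓ g = y) :
    w ⊓ y ≤ x' ⊓ y := by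
  have hwy' : ¬w ≤ y := fun h => hwx.2 (h.lt_of_ne hwy) hyx.lt
  have hyw : ¬y ≤ w := fun h => hyx.2 (h.lt_of_ne hwy.symm) hwx.lt
  have hx'y' : ¬x' ≤ y := fun h => hx'x.2 (h.lt_of_ne hx'y) hyx.lt
  by_cases hbw : x' ⊓ y ≤ w
  · rcases (le_inf hbw inf_le_right : x' ⊓ y ≤ w ⊓ y).eq_or_lt with h | h
    · exact h.ge
    · exact absurd (inf_le_right.lt_of_ne fun h' => hyw (inf_eq_right.1 h')) (hcov.2 h)
  by_cases hwx'y : w ⊓ x' ≤ x' ⊓ y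
  · have hg : ∀ c ≤ x, c ⊓ g ≤ y ⊓ y := fun c hc =>
      (inf_idem y).symm ▸ hxg ▸ inf_le_inf_right g hc
    refine absurd (hslim.le_or_le_or_le (a₁ := x') (a₂ := w) (b₁ := y) (b₂ := y)
      (by simpa only [inf_comm, inf_idem] using hwx'y.trans inf_le_right) (hg x' hx'x.le)
      (hg w hwx.le)) ?_
    simp only [not_or]
    exact ⟨hx'y', hwy', hyg.not_ge⟩
  rcases hslim.le_or_le_or_le (a₁ := w ⊓ y) (a₂ := w ⊓ x') (a₃ := x' ⊓ y)
      (b₁ := x' ⊓ y) (b₂ := x' ⊓ y) (b₃ := w) (by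
        rw [inf_idem]
        exact le_inf (inf_le_right.trans inf_le_right) (inf_le_left.trans inf_le_right))
      (by rw [inf_comm]; exact inf_le_inf_left _ inf_le_left)
      (by rw [inf_comm]; exact inf_le_inf_left _ inf_le_left) with h | h | h
  · exact h
  · exact absurd h hwx'y
  · exact absurd h hbw

end Slim

theorem CovSquare.rel_o_al_of_rel_ar_i {K : Type*} [Lattice K] (S : CovSquare K)
    {θ : LatCon K} (h : θ.rel S.ar S.i) : θ.rel S.o S.al := by
  simpa only [S.inf_eq, inf_eq_left.2 S.al_covby_i.le] using θ.inf_comp (θ.refl S.al) h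

namespace ForkExtension

variable {K : Type*} [Lattice K] {L : Sublattice K} {S : CovSquare L} (F : ForkExtension K L S)

theorem rel_yl_xl {θ : LatCon L} (h : θ.rel S.o S.al) : ∀ j < F.n, θ.rel (F.yl j) (F.xl j)
  | 0, _ => F.yl_zero ▸ F.xl_zero ▸ h
  | j + 1, hj => by
    simpa only [F.xl_inf_yl j hj, inf_eq_left.2 (F.xl_succ_covby j hj).le] using
      θ.inf_comp (θ.refl (F.xl (j + 1))) (rel_yl_xl h j (by omega))

theorem exists_lt_inf_eq_yl {k : ℕ} (hk : k < F.n) : ∃ g, F.yl k < g ∧ F.xl k ⊓ g = F.yl k := by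
  cases k with
  | zero => exact ⟨S.ar, F.yl_zero ▸ S.o_covby_ar.lt, by rw [F.xl_zero, F.yl_zero, S.inf_eq]⟩
  | succ j => exact ⟨F.yl j, (F.yl_succ_covby j hk).lt, F.xl_inf_yl j hk⟩

theorem inf_yl_le_yl_succ [Finite K] (hslim : IsSlim L) {k : ℕ} (hk1 : k + 1 < F.n) {w : L}
    (hw : w ⋖ F.xl k) (hwy : w ≠ F.yl k) : w ⊓ F.yl k ≤ F.yl (k + 1) := by
  obtain ⟨g, hyg, hxg⟩ := F.exists_lt_inf_eq_yl (by omega : k < F.n)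
  have hcov := F.yl_succ_covby k hk1
  rw [← F.xl_inf_yl k hk1] at hcov ⊢
  exact hslim.inf_le_inf_of_covBy (F.yl_covby_xl k (by omega)) (F.xl_succ_covby k hk1) hw
    (F.xl_succ_ne_yl k hk1) hwy hcov hyg hxg

theorem ProtL.exists_covBy_ne {k : ℕ} (hk : F.ProtL k) :
    ∃ w, w ⋖ F.xl k ∧ w ≠ F.yl k ∧ w ≠ F.xl (k + 1) := by
  obtain ⟨-, u, v, w, huv, huw, hvw, hu, hv, hw⟩ := hk
  by_contra! h
  rcases eq_or_ne u (F.yl k) with rfl | hu'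
  · exact hvw ((h v hv huv.symm).trans (h w hw huw.symm).symm)
  rcases eq_or_ne v (F.yl k) with rfl | hv'
  · exact huw ((h u hu hu').trans (h w hw hvw.symm).symm)
  exact huv ((h u hu hu').trans (h v hv hv').symm)

theorem rel_yl_yl_succ [Finite K] (hslim : IsSlim L) {k : ℕ} (hk : F.ProtL k) (hk1 : k + 1 < F.n)
    {θ : LatCon L} (h : θ.rel S.o S.al) : θ.rel (F.yl k) (F.yl (k + 1)) := by
  obtain ⟨w, hw, hwy, hwx⟩ := hk.exists_covBy_ne
  exact θ.rel_of_inf_le_of_sup_eq (F.rel_yl_xl h k (by omega)) (F.rel_yl_xl h (k + 1) hk1) hw.le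
    (F.inf_yl_le_yl_succ hslim hk1 hw hwy) (hw.wcovBy.sup_eq (F.xl_succ_covby k hk1).wcovBy hwx)

end ForkExtension

theorem protrusion_congruence_eq_and_le_general
    {K : Type*} [Lattice K] [Finite K] (L : Sublattice K) (hL : IsSPS L)
    (S : CovSquare L) (F : ForkExtension K L S)
    (k : ℕ) (hk : F.ProtL k) (hk1 : k + 1 < F.n) :
    LatCon.minExt (LatCon.conOf (F.yl k) (F.yl (k + 1))) =
        LatCon.conOf (F.yl k : K) (F.yl (k + 1) : K) ∧
      LatCon.minExt (LatCon.conOf (F.yl k) (F.yl (k + 1))) ≤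
        LatCon.conOf (S.ar : K) (S.i : K) := by
  have heq := LatCon.minExt_conOf (F.yl k) (F.yl (k + 1))
  refine ⟨heq, heq ▸ LatCon.conOf_le ?_⟩
  have hcollapse : ((LatCon.conOf (S.ar : K) S.i).restrict L).rel S.ar S.i :=
    LatCon.rel_conOf (S.ar : K) S.i
  exact F.rel_yl_yl_succ hL.2 hk hk1 (S.rel_o_al_of_rel_ar_i hcollapse)

/-- **Lemma 9.** Let `L` be an SPS lattice, `S` a tight covering square of `L`, and `k ∈ P_l`
(so `x_{l,k}` is a protrusion; `k + 1 ≤ n` so that `y_{l,k+1}` exists). Then in `L[S]`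
(realized as the ambient lattice `K`), `π̄_{l,k} = con_{L[S]}(y_{l,k}, y_{l,k+1})` and
`π̄_{l,k} ≤ ᾱ_r(S) = con_{L[S]}(a_r, i)`. -/
theorem protrusion_congruence_eq_and_le
    {K : Type*} [Lattice K] [Finite K] (L : Sublattice K) (hL : IsSPS L)
    (S : CovSquare L) (F : ForkExtension K L S) (hS : S.Tight)
    (k : ℕ) (hk : F.ProtL k) (hk1 : k + 1 < F.n) :
    LatCon.minExt (LatCon.conOf (F.yl k) (F.yl (k + 1))) =
        LatCon.conOf (F.yl k : K) (F.yl (k + 1) : K) ∧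
      LatCon.minExt (LatCon.conOf (F.yl k) (F.yl (k + 1))) ≤
        LatCon.conOf (S.ar : K) (S.i : K) :=
  protrusion_congruence_eq_and_le_general L hL S F k hk hk1

end ForkCongruence
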